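/- arXiv:math/0111192 — 3 statements merged into one kernel-verified Lean document; each statement's English description precedes it below -/
import Mathlib

section
/- For any k-bounded partition λ, multiplication by the Schur function s_{(k)} of the one-row partition (k) sends the k-Schur function of λ to the k-Schur function of (k,λ): s_{(k)} · s_λ^{(k)} = s_{(k,λ_1,λ_2,…)}^{(k)}. -/
/-!
The `k`-split polynomials are unitriangular over the `h_μ`: expanding each Jacobi–Trudi
determinant, every term other than the diagonal one is `0` or an `h_s` with `s` of the same
size and strictly larger sum of squares (rearrangement inequality). Hence the `G_λ` span
`Λ^(k)`, every `T_j` maps `Λ^(k)` into itself, and as `Λ^(k)` is closed under multiplication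
by `s_(a) = h_a` for `a ≤ k`, every `s_λ^(k)` lies in `Λ^(k)`. The `k`-split of `(k, ν)` is
`(k)` followed by that of `ν`, so `s_(k) G_ν = G_(k,ν)` is fixed by `T_k`; by linearity
`T_k (s_(k) f) = s_(k) f` for every `f ∈ Λ^(k)`, in particular for `f = s_λ^(k)`.
-/

open scoped BigOperators Classical

noncomputable section

/-- Model of the ring of symmetric functions `Λ = ℚ[h₁,h₂,…]`: the polynomial
ring on the (algebraically independent) complete homogeneous generators. -/
abbrev SymFn : Type := MvPolynomial ℕ ℚ

/-- The complete homogeneous symmetric function `h_r` (`h_0 = 1`). -/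
def hh : ℕ → SymFn
  | 0 => 1
  | r + 1 => MvPolynomial.X r

/-- `h_n` for an integer index, with `h_n = 0` for `n < 0`. -/
def hZ (n : ℤ) : SymFn := if n < 0 then 0 else hh n.toNat

/-- `h_λ = h_{λ₁} h_{λ₂} ⋯`. -/
def hProd (l : List ℕ) : SymFn := (l.map hh).prod

/-- The Schur function via the Jacobi–Trudi determinant
`s_λ = det(h_{λ_i - i + j})_{1 ≤ i,j ≤ ℓ(λ)}`. -/
def schur (l : List ℕ) : SymFn :=
  Matrix.det (Matrix.of fun i j : Fin l.length =>
    hZ (((l.get i : ℕ) : ℤ) - ((i : ℕ) : ℤ) + ((j : ℕ) : ℤ)))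

/-- A partition: a weakly decreasing list of positive integers. -/
def IsPartition (l : List ℕ) : Prop := l.Pairwise (· ≥ ·) ∧ ∀ x ∈ l, 0 < x

/-- A `k`-bounded partition: all parts at most `k`. -/
def KBounded (k : ℕ) (l : List ℕ) : Prop := ∀ x ∈ l, x ≤ k

/-- The main hook-length `h_M(λ) = λ₁ + ℓ(λ) - 1`. -/
def mainHook (l : List ℕ) : ℕ := l.headI + l.length - 1

/-- Dominance order: `Dominates μ λ` means `μ ≥ λ`, i.e.
`λ₁ + ⋯ + λ_i ≤ μ₁ + ⋯ + μ_i` for all `i`. -/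
def Dominates (mu lam : List ℕ) : Prop := ∀ i : ℕ, (lam.take i).sum ≤ (mu.take i).sum

/-- Auxiliary function (with fuel) computing the `k`-split of a partition:
successive blocks of main hook-length exactly `k` (the last block having
main hook-length at most `k`). -/
def kSplitAux (k : ℕ) : ℕ → List ℕ → List (List ℕ)
  | _, [] => []
  | 0, l => [l]
  | fuel + 1, a :: rest =>
    if (a :: rest).length ≤ k + 1 - a ∨ k + 1 - a = 0 then [a :: rest]
    else (a :: rest).take (k + 1 - a) :: kSplitAux k fuel ((a :: rest).drop (k + 1 - a))

/-- The `k`-split `λ^{→k}` of a `k`-bounded partition `λ`. -/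
def kSplit (k : ℕ) (l : List ℕ) : List (List ℕ) := kSplitAux k l.length l

/-- The `k`-split polynomial `G_λ^{(k)} = s_{λ^{(1)}} s_{λ^{(2)}} ⋯ s_{λ^{(r)}}`. -/
def Gk (k : ℕ) (l : List ℕ) : SymFn := ((kSplit k l).map schur).prod

/-- `Λ^{(k)}`: the linear span of the `h_λ` over `k`-bounded partitions `λ`. -/
def LamK (k : ℕ) : Submodule ℚ SymFn :=
  Submodule.span ℚ {f : SymFn | ∃ l : List ℕ, IsPartition l ∧ KBounded k l ∧ f = hProd l}

/-- The `k`-Schur functions (at `t = 1`), defined recursively from a family `T`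
of projection operators by `s_λ^{(k)} = T_{λ₁} (s_{λ₁} ⋅ s_{(λ₂,λ₃,…)}^{(k)})`,
starting from `s_{()}^{(k)} = 1`. -/
def kSchurWith (T : ℕ → (SymFn →ₗ[ℚ] SymFn)) : List ℕ → SymFn
  | [] => 1
  | a :: rest => T a (schur [a] * kSchurWith T rest)

/-- `T` is a family of projection operators for `Λ^{(k)}`:
`T_j G_λ^{(k)} = G_λ^{(k)}` if `λ₁ = j` and `0` otherwise, for every
`k`-bounded partition `λ`.  (Any such family restricts to the projection
operator of Lapointe–Morse on `Λ^{(k)}`.) -/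
def ProjOps (k : ℕ) (T : ℕ → (SymFn →ₗ[ℚ] SymFn)) : Prop :=
  ∀ (j : ℕ) (l : List ℕ), IsPartition l → KBounded k l →
    T j (Gk k l) = if l.headI = j then Gk k l else 0

def hMultiset (s : Multiset ℕ) : SymFn := (s.map hh).prod

@[simp] lemma hMultiset_add (s t : Multiset ℕ) :
    hMultiset (s + t) = hMultiset s * hMultiset t := by
  simp [hMultiset]

@[simp] lemma hMultiset_singleton (a : ℕ) : hMultiset {a} = hh a := by
  simp [hMultiset]

lemma hProd_eq_hMultiset (l : List ℕ) : hProd l = hMultiset l := by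
  simp [hProd, hMultiset]

lemma schur_singleton (a : ℕ) : schur [a] = hh a := by
  simp [schur, Matrix.det_unique, hZ]

def sqSum (s : Multiset ℕ) : ℕ := (s.map (· ^ 2)).sum

@[simp] lemma sqSum_add (s t : Multiset ℕ) : sqSum (s + t) = sqSum s + sqSum t := by
  simp [sqSum]

lemma sqSum_le_mul_sum {k : ℕ} {s : Multiset ℕ} (hs : ∀ x ∈ s, x ≤ k) :
    sqSum s ≤ k * s.sum :=
  calc (s.map (· ^ 2)).sum ≤ (s.map (k * ·)).sum :=
        Multiset.sum_map_le_sum_map _ _ fun x hx => by nlinarith [hs x hx]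
    _ = k * s.sum := by rw [Multiset.sum_map_mul_left, Multiset.map_id']

@[to_additive]
lemma prod_map_filter_pos {M : Type*} [CommMonoid M] (f : ℕ → M) (hf : f 0 = 1)
    (s : Multiset ℕ) : ((s.filter (0 < ·)).map f).prod = (s.map f).prod := by
  have hzeros : ((s.filter fun x => ¬ 0 < x).map f).prod = 1 := by
    refine Multiset.prod_eq_one ?_
    simp only [Multiset.mem_map, Multiset.mem_filter, not_lt, Nat.le_zero]
    rintro _ ⟨x, ⟨-, rfl⟩, rfl⟩
    exact hf
  conv_rhs => rw [← Multiset.filter_add_not (0 < ·) s]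
  rw [Multiset.map_add, Multiset.prod_add, hzeros, mul_one]

def toPartition (s : Multiset ℕ) : List ℕ := (s.filter (0 < ·)).sort (· ≥ ·)

lemma coe_toPartition (s : Multiset ℕ) : (toPartition s : Multiset ℕ) = s.filter (0 < ·) :=
  Multiset.sort_eq _ _

lemma isPartition_toPartition (s : Multiset ℕ) : IsPartition (toPartition s) :=
  ⟨Multiset.pairwise_sort _ _, fun _ hx =>
    (Multiset.mem_filter.mp (Multiset.mem_sort _ |>.mp hx)).2⟩

lemma hProd_toPartition (s : Multiset ℕ) : hProd (toPartition s) = hMultiset s := by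
  rw [hProd_eq_hMultiset, coe_toPartition, hMultiset, prod_map_filter_pos hh rfl, hMultiset]

lemma sum_toPartition (s : Multiset ℕ) : (toPartition s : Multiset ℕ).sum = s.sum := by
  rw [coe_toPartition]; simpa using sum_map_filter_pos id rfl s

lemma sqSum_toPartition (s : Multiset ℕ) : sqSum (toPartition s) = sqSum s := by
  rw [sqSum, coe_toPartition, sum_map_filter_pos _ rfl, sqSum]

lemma kBounded_toPartition {k : ℕ} {s : Multiset ℕ} (hs : ∀ x ∈ s, x ≤ k) :
    KBounded k (toPartition s) :=
  fun _ hx => hs _ (Multiset.mem_of_mem_filter (Multiset.mem_sort _ |>.mp hx))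

def hSpan (P : Multiset ℕ → Prop) : Submodule ℚ SymFn :=
  Submodule.span ℚ (hMultiset '' {s | P s})

lemma hMultiset_mem_hSpan {P : Multiset ℕ → Prop} {s : Multiset ℕ} (hs : P s) :
    hMultiset s ∈ hSpan P :=
  Submodule.subset_span ⟨s, hs, rfl⟩

lemma hSpan_mono {P Q : Multiset ℕ → Prop} (h : ∀ s, P s → Q s) : hSpan P ≤ hSpan Q :=
  Submodule.span_mono (Set.image_mono h)

lemma mul_mem_hSpan {P Q R : Multiset ℕ → Prop} (hPQR : ∀ s t, P s → Q t → R (s + t))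
    {f g : SymFn} (hf : f ∈ hSpan P) (hg : g ∈ hSpan Q) : f * g ∈ hSpan R := by
  have hfg := Submodule.mul_mem_mul hf hg
  rw [hSpan, hSpan, Submodule.span_mul_span] at hfg
  refine Submodule.span_mono ?_ hfg
  rintro _ ⟨_, ⟨s, hs, rfl⟩, _, ⟨t, ht, rfl⟩, rfl⟩
  exact ⟨s + t, hPQR s t hs ht, hMultiset_add s t⟩

-- The order in which `s_β` and `G_λ` are unitriangular over the `h_μ`. It is well founded
-- in each degree because `sqSum s ≤ k * s.sum` for `k`-bounded `s`.
def hSpanAbove (k : ℕ) (t : Multiset ℕ) : Submodule ℚ SymFn :=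
  hSpan fun s => (∀ x ∈ s, x ≤ k) ∧ s.sum = t.sum ∧ sqSum t < sqSum s

lemma mul_sub_mem_hSpanAbove {k : ℕ} {t u : Multiset ℕ} (ht : ∀ x ∈ t, x ≤ k)
    (hu : ∀ x ∈ u, x ≤ k) {f g : SymFn} (hf : f - hMultiset t ∈ hSpanAbove k t)
    (hg : g - hMultiset u ∈ hSpanAbove k u) :
    f * g - hMultiset (t + u) ∈ hSpanAbove k (t + u) := by
  have ht' : hMultiset t ∈
      hSpan fun s => (∀ x ∈ s, x ≤ k) ∧ s.sum = t.sum ∧ sqSum t = sqSum s :=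
    hMultiset_mem_hSpan ⟨ht, rfl, rfl⟩
  have hu' : hMultiset u ∈
      hSpan fun s => (∀ x ∈ s, x ≤ k) ∧ s.sum = u.sum ∧ sqSum u = sqSum s :=
    hMultiset_mem_hSpan ⟨hu, rfl, rfl⟩
  have hsplit : f * g - hMultiset (t + u) = (f - hMultiset t) * (g - hMultiset u)
      + (f - hMultiset t) * hMultiset u + hMultiset t * (g - hMultiset u) := by
    rw [hMultiset_add]; ring
  rw [hsplit]
  refine add_mem (add_mem (mul_mem_hSpan ?_ hf hg) (mul_mem_hSpan ?_ hf hu'))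
    (mul_mem_hSpan ?_ ht' hg) <;>
  · rintro s s' ⟨hs, hsum, hsq⟩ ⟨hs', hsum', hsq'⟩
    refine ⟨fun x hx => (Multiset.mem_add.mp hx).elim (hs x) (hs' x), ?_, ?_⟩ <;> simp <;> omega

open Equiv Finset in
lemma sum_sq_lt_sum_sq_comp_perm {n : ℕ} {c : Fin n → ℤ} (hc : StrictAnti c)
    {σ : Perm (Fin n)} (hσ : σ ≠ 1) :
    ∑ i, (c i + i) ^ 2 < ∑ i, (c (σ i) + i) ^ 2 := by
  -- Only the cross term `∑ c (σ i) * i` of the expanded squares depends on `σ`; by the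
  -- rearrangement inequality it is minimal exactly when `σ` is monotone.
  have hanti : Antivary c fun i : Fin n => (i : ℤ) := fun i j hij =>
    (hc (by simpa using hij)).le
  have hlt : ∑ i, c i * (i : ℤ) < ∑ i, c (σ i) * (i : ℤ) := by
    refine hanti.sum_mul_lt_sum_comp_perm_mul_iff.mpr fun h => hσ ?_
    have hmono : StrictMono σ := fun i j hij =>
      (hc.le_iff_ge.mp (h (by simpa using hij))).lt_of_ne (σ.injective.ne hij.ne)
    exact Perm.ext fun i => congrFun hmono.eq_id i
  have hsq : ∑ i, c (σ i) ^ 2 = ∑ i, c i ^ 2 := Equiv.sum_comp σ fun i => c i ^ 2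
  simp only [add_sq, sum_add_distrib, mul_assoc, ← mul_sum, hsq]
  linarith

-- The indices of the `σ`-term `∏ i, h_{c (σ i) + i}` of `det (h_{c i + j})`, truncated at `0`
-- by `toNat`: only meaningful when none of them is negative (otherwise the term vanishes).
def jtParts {n : ℕ} (c : Fin n → ℤ) (σ : Equiv.Perm (Fin n)) : Multiset ℕ :=
  Finset.univ.val.map fun i => (c (σ i) + i).toNat

section JacobiTrudi

variable {n : ℕ} {c : Fin n → ℤ} {σ : Equiv.Perm (Fin n)}

lemma prod_hZ_eq_hMultiset (hσ : ∀ i, 0 ≤ c (σ i) + i) :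
    ∏ i, hZ (c (σ i) + i) = hMultiset (jtParts c σ) := by
  rw [hMultiset, jtParts, Multiset.map_map, Finset.prod_eq_multiset_prod]
  congr 1
  refine Multiset.map_congr rfl fun i _ => ?_
  simp [hZ, (hσ i).not_gt]

lemma cast_sum_jtParts (hσ : ∀ i, 0 ≤ c (σ i) + i) :
    ((jtParts c σ).sum : ℤ) = ∑ i, (c i + i) := by
  rw [jtParts, ← Finset.sum_eq_multiset_sum, Nat.cast_sum]
  simp only [Int.toNat_of_nonneg (hσ _), Finset.sum_add_distrib]
  rw [Equiv.sum_comp σ c]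

lemma cast_sqSum_jtParts (hσ : ∀ i, 0 ≤ c (σ i) + i) :
    (sqSum (jtParts c σ) : ℤ) = ∑ i, (c (σ i) + i) ^ 2 := by
  rw [sqSum, jtParts, Multiset.map_map, ← Finset.sum_eq_multiset_sum, Nat.cast_sum]
  simp [Int.toNat_of_nonneg (hσ _)]

lemma det_hZ_sub_mem_hSpanAbove {k : ℕ} (hc : StrictAnti c) (hpos : ∀ i, 0 ≤ c i + i)
    (hk : ∀ i j : Fin n, c i + j ≤ k) :
    (Matrix.of fun i j : Fin n => hZ (c i + j)).det - hMultiset (jtParts c 1)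
      ∈ hSpanAbove k (jtParts c 1) := by
  have hpos' : ∀ i, 0 ≤ c ((1 : Equiv.Perm (Fin n)) i) + i := hpos
  rw [Matrix.det_apply, ← Finset.add_sum_erase _ _ (Finset.mem_univ 1)]
  simp only [Equiv.Perm.sign_one, one_smul, Matrix.of_apply]
  rw [prod_hZ_eq_hMultiset hpos', add_sub_cancel_left]
  refine Submodule.sum_mem _ fun σ hσ => Submodule.smul_of_tower_mem _ _ ?_
  by_cases hneg : ∃ i, c (σ i) + i < 0
  · obtain ⟨i, hi⟩ := hneg
    rw [Finset.prod_eq_zero (Finset.mem_univ i) (by simp [hZ, hi])]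
    exact zero_mem _
  push Not at hneg
  rw [prod_hZ_eq_hMultiset hneg]
  refine hMultiset_mem_hSpan ⟨?_, ?_, ?_⟩
  · simp only [jtParts, Multiset.mem_map, Finset.mem_val, Finset.mem_univ, true_and]
    rintro _ ⟨i, rfl⟩
    have := hk (σ i) i
    omega
  · exact_mod_cast (cast_sum_jtParts hneg).trans (cast_sum_jtParts hpos').symm
  · have := sum_sq_lt_sum_sq_comp_perm hc (Finset.mem_erase.mp hσ).1
    rw [← Nat.cast_lt (α := ℤ), cast_sqSum_jtParts hneg, cast_sqSum_jtParts hpos']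
    simpa using this

end JacobiTrudi

lemma le_headI_of_mem {l : List ℕ} (hl : l.Pairwise (· ≥ ·)) {x : ℕ} (hx : x ∈ l) :
    x ≤ l.headI := by
  cases l with
  | nil => simp at hx
  | cons a t => exact (List.mem_cons.mp hx).elim le_of_eq ((List.pairwise_cons.mp hl).1 x)

lemma schur_sub_hProd_mem_hSpanAbove {k : ℕ} {β : List ℕ} (hβ : IsPartition β)
    (hk : mainHook β ≤ k) : schur β - hProd β ∈ hSpanAbove k β := by
  have hparts : jtParts (fun i : Fin β.length => (β.get i : ℤ) - i) 1 = β := by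
    simp [jtParts, Fin.univ_val_map]
  rw [hProd_eq_hMultiset, ← hparts]
  refine det_hZ_sub_mem_hSpanAbove (fun i j hij => ?_) (fun i => by simp) (fun i j => ?_)
  · have := hβ.1.rel_get_of_lt hij
    omega
  · have h1 := le_headI_of_mem hβ.1 (List.get_mem β i)
    have h2 := j.isLt
    simp only [mainHook] at hk
    omega

lemma flatten_kSplitAux (k fuel : ℕ) (l : List ℕ) : (kSplitAux k fuel l).flatten = l := by
  induction fuel generalizing l with
  | zero => cases l <;> simp [kSplitAux]
  | succ fuel ih =>
    cases l with
    | nil => simp [kSplitAux]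
    | cons a rest =>
      rw [kSplitAux]
      split_ifs
      · simp
      · rw [List.flatten_cons, ih, List.take_append_drop]

lemma mainHook_le_of_mem_kSplitAux {k fuel : ℕ} {l b : List ℕ} (hfuel : l.length ≤ fuel)
    (hl : KBounded k l) (hb : b ∈ kSplitAux k fuel l) : mainHook b ≤ k := by
  induction fuel generalizing l with
  | zero => simp_all [kSplitAux]
  | succ fuel ih =>
    cases l with
    | nil => simp [kSplitAux] at hb
    | cons a rest =>
      have ha : a ≤ k := hl a List.mem_cons_self
      rw [kSplitAux] at hb
      split_ifs at hb with hshort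
      · rw [List.mem_singleton.mp hb, mainHook]
        simp only [List.headI_cons, List.length_cons] at hshort ⊢
        omega
      · rcases List.mem_cons.mp hb with rfl | hb
        · obtain ⟨m, hm⟩ : ∃ m, k + 1 - a = m + 1 := ⟨k - a, by omega⟩
          simp only [hm, List.take_succ_cons, mainHook, List.headI_cons, List.length_cons,
            List.length_take] at hshort ⊢
          omega
        · refine ih ?_ (fun x hx => hl x (List.mem_of_mem_drop hx)) hb
          simp only [List.length_drop, List.length_cons] at hfuel ⊢
          omega

lemma kSplit_blocks {k : ℕ} {l b : List ℕ} (hl : IsPartition l) (hlk : KBounded k l)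
    (hb : b ∈ kSplit k l) : IsPartition b ∧ KBounded k b ∧ mainHook b ≤ k := by
  have hsub : b.Sublist l := flatten_kSplitAux k l.length l ▸ List.sublist_flatten_of_mem hb
  exact ⟨⟨hl.1.sublist hsub, fun x hx => hl.2 x (hsub.subset hx)⟩,
    fun x hx => hlk x (hsub.subset hx), mainHook_le_of_mem_kSplitAux le_rfl hlk hb⟩

lemma kSplit_cons_self (k : ℕ) (ν : List ℕ) : kSplit k (k :: ν) = [k] :: kSplit k ν := by
  cases ν with
  | nil => simp [kSplit, kSplitAux]
  | cons a ν => simp [kSplit, kSplitAux]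

lemma Gk_cons_self (k : ℕ) (ν : List ℕ) : Gk k (k :: ν) = schur [k] * Gk k ν := by
  rw [Gk, kSplit_cons_self, List.map_cons, List.prod_cons, Gk]

lemma prod_schur_sub_mem_hSpanAbove {k : ℕ} (L : List (List ℕ))
    (hL : ∀ b ∈ L, IsPartition b ∧ KBounded k b ∧ mainHook b ≤ k) :
    (L.map schur).prod - hProd L.flatten ∈ hSpanAbove k L.flatten := by
  induction L with
  | nil => simp [hProd]
  | cons b L ih =>
    obtain ⟨hb, hbk, hbm⟩ := hL b List.mem_cons_self
    have hLk : ∀ x ∈ (L.flatten : Multiset ℕ), x ≤ k := fun x hx => by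
      obtain ⟨c, hc, hxc⟩ := List.mem_flatten.mp (Multiset.mem_coe.mp hx)
      exact (hL c (List.mem_cons_of_mem b hc)).2.1 x hxc
    have ih' := ih fun c hc => hL c (List.mem_cons_of_mem b hc)
    rw [hProd_eq_hMultiset] at ih' ⊢
    rw [List.map_cons, List.prod_cons, List.flatten_cons, ← Multiset.coe_add]
    exact mul_sub_mem_hSpanAbove (fun x hx => hbk x hx) hLk
      (hProd_eq_hMultiset b ▸ schur_sub_hProd_mem_hSpanAbove hb hbm) ih'

lemma Gk_sub_hProd_mem_hSpanAbove {k : ℕ} {l : List ℕ} (hl : IsPartition l)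
    (hlk : KBounded k l) : Gk k l - hProd l ∈ hSpanAbove k l := by
  have := prod_schur_sub_mem_hSpanAbove (kSplit k l) fun b hb => kSplit_blocks hl hlk hb
  rwa [kSplit, flatten_kSplitAux] at this

lemma LamK_eq_hSpan (k : ℕ) : LamK k = hSpan fun s => ∀ x ∈ s, x ≤ k := by
  apply le_antisymm
  · refine Submodule.span_le.mpr ?_
    rintro _ ⟨l, -, hlk, rfl⟩
    exact hProd_eq_hMultiset l ▸ hMultiset_mem_hSpan fun x hx => hlk x hx
  · refine Submodule.span_le.mpr ?_
    rintro _ ⟨s, hs, rfl⟩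
    exact hProd_toPartition s ▸
      Submodule.subset_span ⟨_, isPartition_toPartition s, kBounded_toPartition hs, rfl⟩

def GkSpan (k : ℕ) : Submodule ℚ SymFn :=
  Submodule.span ℚ {f | ∃ l : List ℕ, IsPartition l ∧ KBounded k l ∧ f = Gk k l}

lemma hProd_mem_GkSpan {k : ℕ} {μ : List ℕ} (hμ : IsPartition μ) (hμk : KBounded k μ) :
    hProd μ ∈ GkSpan k := by
  induction hd : k * (μ : Multiset ℕ).sum - sqSum μ using Nat.strong_induction_on
    generalizing μ with
  | _ d ih =>
    have hG : Gk k μ ∈ GkSpan k := Submodule.subset_span ⟨μ, hμ, hμk, rfl⟩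
    have herr : Gk k μ - hProd μ ∈ GkSpan k := by
      refine Submodule.span_le.mpr ?_ (Gk_sub_hProd_mem_hSpanAbove hμ hμk)
      rintro _ ⟨s, ⟨hs, hsum, hsq⟩, rfl⟩
      have hbound := sqSum_le_mul_sum hs
      rw [← hProd_toPartition]
      refine ih _ ?_ (isPartition_toPartition s) (kBounded_toPartition hs) rfl
      rw [sum_toPartition, sqSum_toPartition, ← hd, ← hsum]
      omega
    simpa using sub_mem hG herr

lemma GkSpan_eq_LamK (k : ℕ) : GkSpan k = LamK k := by
  apply le_antisymm
  · refine Submodule.span_le.mpr ?_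
    rintro _ ⟨l, hl, hlk, rfl⟩
    have hh : hProd l ∈ LamK k := Submodule.subset_span ⟨l, hl, hlk, rfl⟩
    have herr : Gk k l - hProd l ∈ LamK k := by
      rw [LamK_eq_hSpan]
      exact hSpan_mono (fun s hs => hs.1) (Gk_sub_hProd_mem_hSpanAbove hl hlk)
    simpa using add_mem herr hh
  · refine Submodule.span_le.mpr ?_
    rintro _ ⟨l, hl, hlk, rfl⟩
    exact hProd_mem_GkSpan hl hlk

lemma hh_mul_mem_LamK {k a : ℕ} (ha : a ≤ k) {f : SymFn} (hf : f ∈ LamK k) :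
    hh a * f ∈ LamK k := by
  rw [LamK_eq_hSpan] at hf ⊢
  refine mul_mem_hSpan (P := (· = {a})) ?_ (hMultiset_singleton a ▸ hMultiset_mem_hSpan rfl) hf
  rintro _ s rfl hs x hx
  rw [Multiset.singleton_add, Multiset.mem_cons] at hx
  exact hx.elim (· ▸ ha) (hs x)

section ProjOps

variable {k : ℕ} {T : ℕ → (SymFn →ₗ[ℚ] SymFn)}

lemma ProjOps.apply_mem_LamK (hT : ProjOps k T) (j : ℕ) {f : SymFn} (hf : f ∈ LamK k) :
    T j f ∈ LamK k := by
  rw [← GkSpan_eq_LamK] at hf ⊢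
  refine (Submodule.span_le (p := (GkSpan k).comap (T j))).mpr ?_ hf
  rintro _ ⟨l, hl, hlk, rfl⟩
  rw [SetLike.mem_coe, Submodule.mem_comap, hT j l hl hlk]
  split_ifs
  · exact Submodule.subset_span ⟨l, hl, hlk, rfl⟩
  · exact zero_mem _

lemma ProjOps.kSchurWith_mem_LamK (hT : ProjOps k T) {l : List ℕ} (hl : KBounded k l) :
    kSchurWith T l ∈ LamK k := by
  induction l with
  | nil => exact Submodule.subset_span ⟨[], ⟨.nil, by simp⟩, by simp [KBounded], rfl⟩
  | cons a l ih =>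
    refine hT.apply_mem_LamK a ?_
    rw [schur_singleton]
    exact hh_mul_mem_LamK (hl a List.mem_cons_self)
      (ih fun x hx => hl x (List.mem_cons_of_mem a hx))

lemma ProjOps.apply_schur_row_mul (hk : 1 ≤ k) (hT : ProjOps k T) {f : SymFn}
    (hf : f ∈ LamK k) : T k (schur [k] * f) = schur [k] * f := by
  rw [← GkSpan_eq_LamK] at hf
  refine LinearMap.eqOn_span' (f := T k ∘ₗ LinearMap.mulLeft ℚ (schur [k]))
    (g := LinearMap.mulLeft ℚ (schur [k])) ?_ hf
  rintro _ ⟨l, hl, hlk, rfl⟩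
  have hkl : IsPartition (k :: l) := ⟨List.pairwise_cons.mpr ⟨hlk, hl.1⟩,
    fun x hx => (List.mem_cons.mp hx).elim (· ▸ hk) (hl.2 x)⟩
  have hklk : KBounded k (k :: l) := fun x hx => (List.mem_cons.mp hx).elim le_of_eq (hlk x)
  simpa [← Gk_cons_self] using hT k (k :: l) hkl hklk

end ProjOps

theorem schur_row_mul_kSchur_general (k : ℕ) (hk : 1 ≤ k)
    (T : ℕ → (SymFn →ₗ[ℚ] SymFn)) (hT : ProjOps k T)
    (l : List ℕ) (hb : KBounded k l) :
    schur [k] * kSchurWith T l = kSchurWith T (k :: l) :=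
  (hT.apply_schur_row_mul hk (hT.kSchurWith_mem_LamK hb)).symm

/-- For any `k`-bounded partition `λ`, multiplication by the
Schur function `s_{(k)}` sends the `k`-Schur function of `λ` to the `k`-Schur
function of `(k,λ)`: `s_{(k)} ⋅ s_λ^{(k)} = s_{(k,λ)}^{(k)}`. -/
theorem schur_row_mul_kSchur (k : ℕ) (hk : 1 ≤ k)
    (T : ℕ → (SymFn →ₗ[ℚ] SymFn)) (hT : ProjOps k T)
    (l : List ℕ) (hl : IsPartition l) (hb : KBounded k l) :
    schur [k] * kSchurWith T l = kSchurWith T (k :: l) :=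
  schur_row_mul_kSchur_general k hk T hT l hb
end
end

section
/- The images of the homogeneous symmetric functions h_λ, as λ ranges over the k-irreducible partitions, form a basis of the quotient ring Λ^{(k)}/I_k. -/
open scoped BigOperators Classical

noncomputable section

/-- `Λ^{(k)} = ℚ[h₁,…,h_k]` as a subalgebra (subring) of `Λ`. -/
def LamKAlg (k : ℕ) : Subalgebra ℚ SymFn :=
  Algebra.adjoin ℚ {f : SymFn | ∃ i : ℕ, 1 ≤ i ∧ i ≤ k ∧ f = hh i}

/-- The ideal `I_k` of `Λ^{(k)}` generated by the Schur functions indexed by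
the `k`-rectangles `(ℓ^{k+1-ℓ})`, `ℓ = 1,…,k`. -/
def rectIdeal (k : ℕ) : Ideal (LamKAlg k) :=
  Ideal.span {x : LamKAlg k | ∃ l : ℕ, 1 ≤ l ∧ l ≤ k ∧
    (x : SymFn) = schur (List.replicate (k + 1 - l) l)}

/-- A `k`-irreducible partition: a `k`-bounded partition with at most `i`
parts equal to `k - i` for each `i = 0,…,k-1`. -/
def KIrreducible (k : ℕ) (l : List ℕ) : Prop :=
  IsPartition l ∧ KBounded k l ∧ ∀ i < k, l.count (k - i) ≤ i

/-!
Identify `Λ^{(k)}` with `ℚ[X₀, …, X_{k-1}]` via `X_p = h_{p+1}` and give `h_z` the weight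
`z (k + 1 - z)`. By strict concavity of this weight, in the Jacobi–Trudi determinant of the
`k`-rectangle `((p+1)^(k-p))` the diagonal term `h_{p+1}^(k-p)` strictly outweighs all other terms.
So the rectangles behave like a Gröbner basis with leading monomials `X_p^(k-p)`: replacing every
`X_p^(k-p)` in `X^d` by the rectangle yields a unitriangular basis of the polynomial ring, in which
`I_k` is spanned by the elements with `d_p ≥ k - p` for some `p`. Hence the standard monomials
(`d_p < k - p` for all `p`) form a basis of the quotient, and these are exactly the `h_λ` with `λ`
`k`-irreducible.
-/

open MvPolynomial Finsupp

namespace MvPolynomial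

variable {σ R : Type*} [CommRing R]

section LeadingMonomial

variable (w : σ → ℕ)

def HasLeadingMonomial (f : MvPolynomial σ R) (m : σ →₀ ℕ) : Prop :=
  ∀ d ∈ (f - monomial m 1).support, weight w d < weight w m

variable {w}

theorem hasLeadingMonomial_monomial (m : σ →₀ ℕ) :
    HasLeadingMonomial w (monomial m (1 : R)) m := by
  simp [HasLeadingMonomial]

namespace HasLeadingMonomial

variable {f g : MvPolynomial σ R} {m m' d : σ →₀ ℕ}

theorem weight_le (hf : HasLeadingMonomial w f m) (hd : d ∈ f.support) :
    weight w d ≤ weight w m := by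
  rw [← sub_add_cancel f (monomial m 1)] at hd
  rcases Finset.mem_union.1 (support_add hd) with hd | hd
  · exact (hf d hd).le
  · rw [Finset.mem_singleton.1 (support_monomial_subset hd)]

theorem coeff_eq_zero (hf : HasLeadingMonomial w f m) (hdm : d ≠ m)
    (hw : weight w m ≤ weight w d) : coeff d f = 0 := by
  have hd : d ∉ (f - monomial m 1).support := fun hd => (hf d hd).not_ge hw
  rw [notMem_support_iff, coeff_sub, coeff_monomial, if_neg hdm.symm, sub_zero] at hd
  exact hd

theorem coeff_self (hf : HasLeadingMonomial w f m) : coeff m f = 1 := by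
  have hm : m ∉ (f - monomial m 1).support := fun hm => (hf m hm).false
  rw [notMem_support_iff, coeff_sub, coeff_monomial, if_pos rfl, sub_eq_zero] at hm
  exact hm

theorem mul (hf : HasLeadingMonomial w f m) (hg : HasLeadingMonomial w g m') :
    HasLeadingMonomial w (f * g) (m + m') := by
  intro d hd
  have hsplit : f * g - monomial (m + m') 1
      = (f - monomial m 1) * g + monomial m 1 * (g - monomial m' 1) := by
    have hmul : monomial (m + m') (1 : R) = monomial m 1 * monomial m' 1 := by
      rw [monomial_mul, one_mul]
    rw [hmul]; ring
  rw [hsplit] at hd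
  rw [map_add]
  rcases Finset.mem_union.1 (support_add hd) with hd | hd
  · obtain ⟨d₁, hd₁, d₂, hd₂, rfl⟩ := Finset.mem_add.1 (support_mul _ _ hd)
    rw [map_add]
    exact add_lt_add_of_lt_of_le (hf d₁ hd₁) (hg.weight_le hd₂)
  · obtain ⟨d₁, hd₁, d₂, hd₂, rfl⟩ := Finset.mem_add.1 (support_mul _ _ hd)
    rw [Finset.mem_singleton.1 (support_monomial_subset hd₁), map_add]
    exact (add_lt_add_iff_left _).2 (hg d₂ hd₂)

theorem pow (hf : HasLeadingMonomial w f m) (j : ℕ) :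
    HasLeadingMonomial w (f ^ j) (j • m) := by
  induction j with
  | zero => simpa using hasLeadingMonomial_monomial (R := R) (w := w) 0
  | succ j ih => rw [pow_succ, succ_nsmul]; exact ih.mul hf

theorem prod {ι : Type*} (s : Finset ι) {f : ι → MvPolynomial σ R} {m : ι → σ →₀ ℕ}
    (h : ∀ i ∈ s, HasLeadingMonomial w (f i) (m i)) :
    HasLeadingMonomial w (∏ i ∈ s, f i) (∑ i ∈ s, m i) := by
  classical
  induction s using Finset.induction with
  | empty => simpa using hasLeadingMonomial_monomial (R := R) (w := w) 0
  | insert a s ha ih =>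
    rw [Finset.prod_insert ha, Finset.sum_insert ha]
    exact (h a (Finset.mem_insert_self a s)).mul
      (ih fun i hi => h i (Finset.mem_insert_of_mem hi))

end HasLeadingMonomial

theorem mem_of_forall_monomial_mem {P : Submodule R (MvPolynomial σ R)} {f : MvPolynomial σ R}
    (h : ∀ d ∈ f.support, monomial d 1 ∈ P) : f ∈ P := by
  rw [f.as_sum]
  refine Submodule.sum_mem _ fun d hd => ?_
  rw [← mul_one (coeff d f), ← smul_eq_mul, ← smul_monomial]
  exact P.smul_mem _ (h d hd)

variable {v : (σ →₀ ℕ) → MvPolynomial σ R}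

theorem linearIndependent_of_hasLeadingMonomial (hv : ∀ d, HasLeadingMonomial w (v d) d) :
    LinearIndependent R v := by
  classical
  rw [linearIndependent_iff']
  intro s c hsum i hi
  by_contra hci
  obtain ⟨d₀, hd₀, hmax⟩ := Finset.exists_max_image (s.filter fun d => c d ≠ 0) (weight w)
    ⟨i, Finset.mem_filter.2 ⟨hi, hci⟩⟩
  rw [Finset.mem_filter] at hd₀
  have hcoeff : coeff d₀ (∑ d ∈ s, c d • v d) = c d₀ := by
    rw [coeff_sum, Finset.sum_eq_single_of_mem d₀ hd₀.1, coeff_smul, (hv d₀).coeff_self,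
      smul_eq_mul, mul_one]
    intro d hd hne
    by_cases hcd : c d = 0
    · rw [hcd, zero_smul, coeff_zero]
    · rw [coeff_smul, (hv d).coeff_eq_zero hne.symm (hmax d (Finset.mem_filter.2 ⟨hd, hcd⟩)),
        smul_zero]
  rw [hsum, coeff_zero] at hcoeff
  exact hd₀.2 hcoeff.symm

theorem span_eq_top_of_hasLeadingMonomial (hv : ∀ d, HasLeadingMonomial w (v d) d) :
    Submodule.span R (Set.range v) = ⊤ := by
  have hmon (d : σ →₀ ℕ) : monomial d 1 ∈ Submodule.span R (Set.range v) := by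
    induction hN : weight w d using Nat.strong_induction_on generalizing d with
    | _ N ih =>
      rw [← sub_sub_cancel (v d) (monomial d 1)]
      refine sub_mem (Submodule.subset_span ⟨d, rfl⟩)
        (mem_of_forall_monomial_mem fun e he => ih _ (hN ▸ hv d e he) e rfl)
  exact eq_top_iff.2 fun f _ => mem_of_forall_monomial_mem fun d _ => hmon d

end LeadingMonomial

section StandardMonomials

variable [Fintype σ] (n : σ → ℕ) (g : σ → MvPolynomial σ R)

def IsStandard (d : σ →₀ ℕ) : Prop := ∀ p, d p < n p

/-- `X^d` with every `X p ^ n p` replaced by `g p`. -/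
def substMonomial (d : σ →₀ ℕ) : MvPolynomial σ R :=
  ∏ p, g p ^ (d p / n p) * X p ^ (d p % n p)

variable {n g}

theorem prod_X_pow_eq_monomial_one (d : σ →₀ ℕ) : ∏ p, X p ^ d p = monomial d (1 : R) := by
  simp_rw [X_pow_eq_monomial, ← monomial_sum_one, univ_sum_single]

theorem substMonomial_of_isStandard {d : σ →₀ ℕ} (hd : IsStandard n d) :
    substMonomial n g d = monomial d 1 := by
  simp_rw [substMonomial, Nat.div_eq_of_lt (hd _), Nat.mod_eq_of_lt (hd _), pow_zero, one_mul,
    prod_X_pow_eq_monomial_one]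

theorem substMonomial_add_single (d : σ →₀ ℕ) {p : σ} (hp : 0 < n p) :
    substMonomial n g (d + single p (n p)) = substMonomial n g d * g p := by
  classical
  have hfactor (q : σ) :
      g q ^ ((d + single p (n p)) q / n q) * X q ^ ((d + single p (n p)) q % n q)
        = (g q ^ (d q / n q) * X q ^ (d q % n q)) * if q = p then g p else 1 := by
    by_cases hq : q = p
    · subst hq
      rw [Finsupp.add_apply, single_eq_same, Nat.add_div_right _ hp, Nat.add_mod_right, pow_succ,
        if_pos rfl]
      ring
    · rw [Finsupp.add_apply, single_eq_of_ne hq, add_zero, if_neg hq, mul_one]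
  rw [substMonomial, Finset.prod_congr rfl fun q _ => hfactor q, Finset.prod_mul_distrib,
    Finset.prod_ite_eq', if_pos (Finset.mem_univ p), substMonomial]

variable {w : σ → ℕ}

theorem hasLeadingMonomial_substMonomial (hg : ∀ p, HasLeadingMonomial w (g p) (single p (n p)))
    (d : σ →₀ ℕ) : HasLeadingMonomial w (substMonomial n g d) d := by
  have hfactor (p : σ) : HasLeadingMonomial w (g p ^ (d p / n p) * X p ^ (d p % n p))
      (single p (d p)) := by
    have h := ((hg p).pow (d p / n p)).mul (X_pow_eq_monomial (R := R) ▸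
      hasLeadingMonomial_monomial (w := w) (single p (d p % n p)))
    rwa [smul_single, smul_eq_mul, ← single_add, Nat.div_add_mod'] at h
  simpa only [substMonomial, univ_sum_single] using
    HasLeadingMonomial.prod Finset.univ fun p _ => hfactor p

theorem span_substMonomial_eq_top (hg : ∀ p, HasLeadingMonomial w (g p) (single p (n p))) :
    Submodule.span R (Set.range (substMonomial n g)) = ⊤ :=
  span_eq_top_of_hasLeadingMonomial (hasLeadingMonomial_substMonomial hg)

theorem substMonomial_mem_span_of_not_isStandard (hn : ∀ p, 0 < n p) {d : σ →₀ ℕ}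
    (hd : ¬ IsStandard n d) : substMonomial n g d ∈ Ideal.span (Set.range g) := by
  obtain ⟨p, hp⟩ := not_forall.1 hd
  obtain ⟨e, rfl⟩ : ∃ e, d = e + single p (n p) :=
    ⟨d - single p (n p), (tsub_add_cancel_of_le (single_le_iff.2 (not_lt.1 hp))).symm⟩
  rw [substMonomial_add_single e (hn p)]
  exact Ideal.mul_mem_left _ _ (Ideal.subset_span ⟨p, rfl⟩)

theorem restrictScalars_span_eq_span_substMonomial
    (hg : ∀ p, HasLeadingMonomial w (g p) (single p (n p))) (hn : ∀ p, 0 < n p) :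
    (Ideal.span (Set.range g)).restrictScalars R =
      Submodule.span R (substMonomial n g '' {d | ¬ IsStandard n d}) := by
  refine le_antisymm (fun x hx => ?_) (Submodule.span_le.2 ?_)
  · obtain ⟨c, rfl⟩ := Ideal.mem_span_range_iff_exists_fun.1 hx
    refine Submodule.sum_mem _ fun p _ => ?_
    have hc : c p ∈ Submodule.span R (Set.range (substMonomial n g)) := by
      rw [span_substMonomial_eq_top hg]; trivial
    generalize c p = f at hc ⊢
    induction hc using Submodule.span_induction with
    | mem x hx =>
      obtain ⟨d, rfl⟩ := hx
      rw [← substMonomial_add_single d (hn p)]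
      refine Submodule.subset_span ⟨_, fun hstd => ?_, rfl⟩
      have := hstd p
      rw [Finsupp.add_apply, single_eq_same] at this
      omega
    | zero => rw [zero_mul]; exact zero_mem _
    | add f f' _ _ hf hf' => rw [add_mul]; exact add_mem hf hf'
    | smul r f _ hf => rw [smul_mul_assoc]; exact Submodule.smul_mem _ r hf
  · rintro _ ⟨d, hd, rfl⟩
    exact substMonomial_mem_span_of_not_isStandard hn hd

theorem linearIndependent_mk_monomial_of_isStandard
    (hg : ∀ p, HasLeadingMonomial w (g p) (single p (n p))) (hn : ∀ p, 0 < n p) :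
    LinearIndependent R fun d : {d // IsStandard n d} =>
      Ideal.Quotient.mk (Ideal.span (Set.range g)) (monomial d.1 (1 : R)) := by
  have hli := linearIndependent_of_hasLeadingMonomial (hasLeadingMonomial_substMonomial hg)
  have hker : LinearMap.ker (Ideal.Quotient.mkₐ R (Ideal.span (Set.range g))).toLinearMap =
      (Ideal.span (Set.range g)).restrictScalars R := by
    ext x; exact Ideal.Quotient.eq_zero_iff_mem
  have hstd := (hli.comp (Subtype.val : {d // IsStandard n d} → σ →₀ ℕ)
    Subtype.val_injective).map (f := (Ideal.Quotient.mkₐ R _).toLinearMap)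
    (by
      rw [hker, restrictScalars_span_eq_span_substMonomial hg hn, Set.range_comp,
        Subtype.range_coe_subtype]
      exact hli.disjoint_span_image disjoint_compl_right)
  have hfun : (fun d : {d // IsStandard n d} =>
      Ideal.Quotient.mk (Ideal.span (Set.range g)) (monomial d.1 (1 : R))) =
      (Ideal.Quotient.mkₐ R _).toLinearMap ∘ substMonomial n g ∘ Subtype.val := by
    funext d
    simp [substMonomial_of_isStandard d.2]
  rw [hfun]
  exact hstd

theorem span_mk_monomial_of_isStandard
    (hg : ∀ p, HasLeadingMonomial w (g p) (single p (n p))) (hn : ∀ p, 0 < n p) :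
    Submodule.span R (Set.range fun d : {d // IsStandard n d} =>
      Ideal.Quotient.mk (Ideal.span (Set.range g)) (monomial d.1 (1 : R))) = ⊤ := by
  rw [eq_top_iff]
  rintro x -
  obtain ⟨f, rfl⟩ := Ideal.Quotient.mk_surjective x
  have hf : f ∈ Submodule.span R (Set.range (substMonomial n g)) := by
    rw [span_substMonomial_eq_top hg]; trivial
  induction hf using Submodule.span_induction with
  | mem y hy =>
    obtain ⟨d, rfl⟩ := hy
    by_cases hd : IsStandard n d
    · exact Submodule.subset_span ⟨⟨d, hd⟩, by rw [substMonomial_of_isStandard hd]⟩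
    · rw [Ideal.Quotient.eq_zero_iff_mem.2 (substMonomial_mem_span_of_not_isStandard hn hd)]
      exact zero_mem _
  | zero => rw [map_zero]; exact zero_mem _
  | add y y' _ _ hy hy' => rw [map_add]; exact add_mem hy hy'
  | smul r y _ hy =>
    rw [show Ideal.Quotient.mk _ (r • y) = r • Ideal.Quotient.mk _ y from
      map_smul (Ideal.Quotient.mkₐ R _) r y]
    exact Submodule.smul_mem _ r hy

variable (n g) in
def standardMonomialBasis (hg : ∀ p, HasLeadingMonomial w (g p) (single p (n p)))
    (hn : ∀ p, 0 < n p) :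
    Module.Basis {d // IsStandard n d} R (MvPolynomial σ R ⧸ Ideal.span (Set.range g)) :=
  .mk (linearIndependent_mk_monomial_of_isStandard hg hn)
    (span_mk_monomial_of_isStandard hg hn).ge

end StandardMonomials

end MvPolynomial

theorem Equiv.Perm.sum_shift_mul_eq {m : ℕ} (τ : Equiv.Perm (Fin m)) (a c : ℤ) :
    ∑ i, (a - (τ i : ℕ) + (i : ℕ)) * (c - (a - (τ i : ℕ) + (i : ℕ))) =
      m * (a * (c - a)) - ∑ i : Fin m, (((i : ℕ) : ℤ) - (τ i : ℕ)) ^ 2 := by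
  have hsum : ∑ i : Fin m, (((i : ℕ) : ℤ) - (τ i : ℕ)) = 0 := by
    rw [Finset.sum_sub_distrib, Equiv.sum_comp τ fun i : Fin m => ((i : ℕ) : ℤ), sub_self]
  calc ∑ i, (a - (τ i : ℕ) + (i : ℕ)) * (c - (a - (τ i : ℕ) + (i : ℕ)))
      = ∑ i : Fin m, (a * (c - a) + (c - 2 * a) * (((i : ℕ) : ℤ) - (τ i : ℕ))
          - (((i : ℕ) : ℤ) - (τ i : ℕ)) ^ 2) := Finset.sum_congr rfl fun i _ => by ring
    _ = m * (a * (c - a)) + (c - 2 * a) * ∑ i : Fin m, (((i : ℕ) : ℤ) - (τ i : ℕ))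
          - ∑ i : Fin m, (((i : ℕ) : ℤ) - (τ i : ℕ)) ^ 2 := by
      rw [Finset.sum_sub_distrib, Finset.sum_add_distrib, Finset.sum_const, Finset.card_univ,
        Fintype.card_fin, nsmul_eq_mul, Finset.mul_sum]
    _ = _ := by rw [hsum]; ring

theorem Equiv.Perm.sum_sub_sq_pos {m : ℕ} {τ : Equiv.Perm (Fin m)} (hτ : τ ≠ 1) :
    0 < ∑ i : Fin m, (((i : ℕ) : ℤ) - (τ i : ℕ)) ^ 2 := by
  obtain ⟨i, hi⟩ : ∃ i, τ i ≠ i := by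
    by_contra! h
    exact hτ (Equiv.ext h)
  refine Finset.sum_pos' (fun j _ => sq_nonneg _) ⟨i, Finset.mem_univ i, ?_⟩
  have : ((τ i : ℕ) : ℤ) ≠ (i : ℕ) := by exact_mod_cast Fin.val_ne_of_ne hi
  exact pow_two_pos_of_ne_zero (sub_ne_zero.2 this.symm)

theorem Finsupp.prod_map_toMultiset {α M : Type*} [Fintype α] [CommMonoid M] (d : α →₀ ℕ)
    (f : α → M) : ((toMultiset d).map f).prod = ∏ a, f a ^ d a := by
  rw [toMultiset_map, prod_toMultiset, prod_mapDomain_index pow_zero pow_add,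
    prod_fintype _ _ fun _ => pow_zero _]

namespace KRectangle

variable (k : ℕ)

/-- The variable `X p` stands for `h_{p+1}`; the weight `z (k + 1 - z)` of `h_z` is strictly
concave in `z`, which is what singles out the diagonal term of a rectangular Jacobi–Trudi
determinant. -/
def hWeight (p : Fin k) : ℕ := ((p : ℕ) + 1) * (k - p)

def hExp : ℕ → Fin k →₀ ℕ
  | 0 => 0
  | r + 1 => if h : r < k then single ⟨r, h⟩ 1 else 0

/-- `h_z` as a polynomial in `X p = h_{p+1}`; the value `0` for `z > k` is junk, never used. -/
def hPoly (z : ℤ) : MvPolynomial (Fin k) ℚ :=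
  if 0 ≤ z ∧ z ≤ k then monomial (hExp k z.toNat) 1 else 0

/-- The Jacobi–Trudi determinant of the `k`-rectangle `((p+1)^(k-p))`. -/
def rectSchur (p : Fin k) : MvPolynomial (Fin k) ℚ :=
  Matrix.det (Matrix.of fun i j : Fin (k - p) => hPoly k ((p : ℕ) + 1 - (i : ℕ) + (j : ℕ)))

variable {k}

theorem weight_hExp {z : ℤ} (h0 : 0 ≤ z) (hz : z ≤ k) :
    (weight (hWeight k) (hExp k z.toNat) : ℤ) = z * (k + 1 - z) := by
  lift z to ℕ using h0
  rw [Int.toNat_natCast]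
  cases z with
  | zero => simp [hExp]
  | succ r =>
    rw [hExp, dif_pos (by omega), weight_single, hWeight, smul_eq_mul, one_mul]
    push_cast [Nat.cast_sub (show r ≤ k by omega)]
    ring

theorem rename_hPoly {z : ℤ} (hz : z ≤ k) : rename Fin.val (hPoly k z) = hZ z := by
  rw [hPoly, hZ]
  by_cases h0 : z < 0
  · rw [if_neg (by omega), if_pos h0, map_zero]
  rw [if_pos ⟨by omega, hz⟩, if_neg h0]
  generalize hr : z.toNat = r
  cases r with
  | zero => simp [hExp, hh]
  | succ r =>
    rw [hExp, dif_pos (by omega)]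
    exact rename_X _ _

theorem hPoly_of_nonneg {z : ℤ} (h0 : 0 ≤ z) (hz : z ≤ k) :
    hPoly k z = monomial (hExp k z.toNat) 1 := if_pos ⟨h0, hz⟩

theorem hExp_succ (p : Fin k) : hExp k ((p : ℕ) + 1) = single p 1 := by
  rw [hExp, dif_pos p.2]

theorem rectSchur_diagonal_term (p : Fin k) :
    ∏ _i : Fin (k - p), hPoly k ((p : ℕ) + 1) = monomial (single p (k - p)) 1 := by
  rw [hPoly_of_nonneg (by omega) (by omega), Finset.prod_const, Finset.card_univ,
    Fintype.card_fin, monomial_pow, one_pow,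
    show (((p : ℕ) : ℤ) + 1).toNat = (p : ℕ) + 1 by omega, hExp_succ, Finsupp.smul_single,
    smul_eq_mul, mul_one]

theorem weight_eq_of_mem_support_prod_hPoly {ι : Type*} [Fintype ι] {z : ι → ℤ}
    (hz : ∀ i, z i ≤ k) {d : Fin k →₀ ℕ} (hd : d ∈ (∏ i, hPoly k (z i)).support) :
    (weight (hWeight k) d : ℤ) = ∑ i, z i * (k + 1 - z i) := by
  classical
  have hz0 (i : ι) : 0 ≤ z i := by
    by_contra! hneg
    rw [Finset.prod_eq_zero (Finset.mem_univ i) (if_neg (by omega)), MvPolynomial.support_zero]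
      at hd
    exact Finset.notMem_empty d hd
  have hprod : ∏ i, hPoly k (z i) = monomial (∑ i, hExp k (z i).toNat) 1 := by
    rw [monomial_sum_one]
    exact Finset.prod_congr rfl fun i _ => hPoly_of_nonneg (hz0 i) (hz i)
  rw [hprod] at hd
  rw [Finset.mem_singleton.1 (support_monomial_subset hd), map_sum, Nat.cast_sum]
  exact Finset.sum_congr rfl fun i _ => weight_hExp (hz0 i) (hz i)

theorem weight_lt_of_mem_support_rectSchur_term (p : Fin k) {τ : Equiv.Perm (Fin (k - p))}
    (hτ : τ ≠ 1) {d : Fin k →₀ ℕ}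
    (hd : d ∈ (∏ i, hPoly k ((p : ℕ) + 1 - (τ i : ℕ) + (i : ℕ))).support) :
    weight (hWeight k) d < weight (hWeight k) (single p (k - p)) := by
  have hd := weight_eq_of_mem_support_prod_hPoly (fun i => by have := i.2; omega) hd
  rw [τ.sum_shift_mul_eq] at hd
  have := τ.sum_sub_sq_pos hτ
  zify
  rw [hd, weight_single, smul_eq_mul, hWeight]
  push_cast [Nat.cast_sub p.2.le]
  linarith

theorem hasLeadingMonomial_rectSchur (p : Fin k) :
    HasLeadingMonomial (hWeight k) (rectSchur k p) (single p (k - p)) := by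
  intro d hd
  rw [rectSchur, Matrix.det_apply', ← Finset.add_sum_erase _ _ (Finset.mem_univ 1)] at hd
  simp only [Matrix.of_apply, Equiv.Perm.sign_one, Units.val_one, Int.cast_one, one_mul,
    Equiv.Perm.one_apply, sub_add_cancel, rectSchur_diagonal_term, add_sub_cancel_left] at hd
  obtain ⟨τ, hτ, hdτ⟩ := Finset.mem_biUnion.1 (support_sum hd)
  rw [← zsmul_eq_mul] at hdτ
  exact weight_lt_of_mem_support_rectSchur_term p (Finset.ne_of_mem_erase hτ)
    (MvPolynomial.support_smul hdτ)

theorem lamKAlg_eq_range_rename :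
    LamKAlg k =
      (rename (Fin.val : Fin k → ℕ) : MvPolynomial (Fin k) ℚ →ₐ[ℚ] SymFn).range := by
  rw [rename_eq_aeval, ← Algebra.adjoin_range_eq_range_aeval, LamKAlg]
  congr 1
  ext f
  constructor
  · rintro ⟨i, hi, hik, rfl⟩
    obtain ⟨r, rfl⟩ := Nat.exists_eq_add_of_le' hi
    exact ⟨⟨r, by omega⟩, rfl⟩
  · rintro ⟨p, rfl⟩
    exact ⟨p + 1, by omega, p.2, rfl⟩

variable (k) in
def lamKAlgEquiv : MvPolynomial (Fin k) ℚ ≃ₐ[ℚ] LamKAlg k :=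
  (AlgEquiv.ofInjective _ (rename_injective _ Fin.val_injective)).trans
    (Subalgebra.equivOfEq _ _ lamKAlg_eq_range_rename.symm)

theorem coe_lamKAlgEquiv (f : MvPolynomial (Fin k) ℚ) :
    (lamKAlgEquiv k f : SymFn) = rename Fin.val f := rfl

theorem rename_rectSchur (p : Fin k) :
    rename Fin.val (rectSchur k p) = schur (List.replicate (k - p) ((p : ℕ) + 1)) := by
  rw [rectSchur, AlgHom.map_det, schur,
    ← Matrix.det_submatrix_equiv_self (finCongr (List.length_replicate ..).symm)]
  congr 1
  ext i j
  simp only [AlgHom.mapMatrix_apply, Matrix.map_apply, Matrix.of_apply, Matrix.submatrix_apply]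
  rw [rename_hPoly (by have := j.2; omega)]
  simp

theorem rectIdeal_eq_map :
    rectIdeal k = (Ideal.span (Set.range (rectSchur k))).map (lamKAlgEquiv k) := by
  rw [rectIdeal, Ideal.map_span, ← Set.range_comp]
  congr 1
  ext x
  constructor
  · rintro ⟨l, hl, hlk, hx⟩
    obtain ⟨r, rfl⟩ := Nat.exists_eq_add_of_le' hl
    refine ⟨⟨r, by omega⟩, Subtype.ext ?_⟩
    rw [Function.comp_apply, coe_lamKAlgEquiv, rename_rectSchur, hx]
    simp
  · rintro ⟨p, rfl⟩
    refine ⟨p + 1, by omega, p.2, ?_⟩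
    rw [Function.comp_apply, coe_lamKAlgEquiv, rename_rectSchur]
    simp

variable (k) in
def quotientEquiv :
    (MvPolynomial (Fin k) ℚ ⧸ Ideal.span (Set.range (rectSchur k))) ≃ₐ[ℚ]
      LamKAlg k ⧸ rectIdeal k :=
  Ideal.quotientEquivAlg _ _ (lamKAlgEquiv k) rectIdeal_eq_map

variable (k) in
def toPartition (d : Fin k →₀ ℕ) : List ℕ :=
  ((toMultiset d).map fun p : Fin k => (p : ℕ) + 1).sort (· ≥ ·)

variable (k) in
def multiplicities (l : List ℕ) : Fin k →₀ ℕ :=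
  Finsupp.equivFunOnFinite.symm fun p => l.count ((p : ℕ) + 1)

theorem multiplicities_apply (l : List ℕ) (p : Fin k) :
    multiplicities k l p = l.count ((p : ℕ) + 1) := rfl

theorem count_toPartition (d : Fin k →₀ ℕ) (p : Fin k) :
    (toPartition k d).count ((p : ℕ) + 1) = d p := by
  classical
  rw [← Multiset.coe_count, toPartition, Multiset.sort_eq,
    Multiset.count_map_eq_count' (fun p : Fin k => (p : ℕ) + 1) _
      (fun p q h => Fin.ext (Nat.succ_injective h)), count_toMultiset]

theorem mem_toPartition {d : Fin k →₀ ℕ} {x : ℕ} (hx : x ∈ toPartition k d) :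
    ∃ p : Fin k, x = (p : ℕ) + 1 := by
  rw [toPartition, Multiset.mem_sort, Multiset.mem_map] at hx
  obtain ⟨p, -, rfl⟩ := hx
  exact ⟨p, rfl⟩

theorem multiplicities_toPartition (d : Fin k →₀ ℕ) :
    multiplicities k (toPartition k d) = d := by
  ext p
  rw [multiplicities_apply, count_toPartition]

theorem toPartition_multiplicities {l : List ℕ} (hl : IsPartition l) (hlk : KBounded k l) :
    toPartition k (multiplicities k l) = l := by
  refine List.Perm.eq_of_pairwise' (Multiset.pairwise_sort _ _) hl.1 (List.perm_iff_count.2 ?_)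
  intro x
  by_cases hx : 1 ≤ x ∧ x ≤ k
  · obtain ⟨r, rfl⟩ := Nat.exists_eq_add_of_le' hx.1
    rw [show r + 1 = ((⟨r, by omega⟩ : Fin k) : ℕ) + 1 from rfl, count_toPartition,
      multiplicities_apply]
  · rw [List.count_eq_zero_of_not_mem fun hm => hx ⟨hl.2 x hm, hlk x hm⟩,
      List.count_eq_zero_of_not_mem fun hm => ?_]
    obtain ⟨p, rfl⟩ := mem_toPartition hm
    exact hx ⟨by omega, p.2⟩

theorem kIrreducible_toPartition {d : Fin k →₀ ℕ}
    (hd : IsStandard (fun p : Fin k => k - p) d) :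
    KIrreducible k (toPartition k d) := by
  refine ⟨⟨Multiset.pairwise_sort _ _, fun x hx => ?_⟩, fun x hx => ?_, fun i hi => ?_⟩
  · obtain ⟨p, rfl⟩ := mem_toPartition hx; omega
  · obtain ⟨p, rfl⟩ := mem_toPartition hx; exact p.2
  · have := hd ⟨k - i - 1, by omega⟩
    rw [show k - i = ((⟨k - i - 1, by omega⟩ : Fin k) : ℕ) + 1 by simp; omega,
      count_toPartition]
    simp only at this
    omega

theorem isStandard_multiplicities {l : List ℕ} (hl : KIrreducible k l) :
    IsStandard (fun p : Fin k => k - p) (multiplicities k l) := by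
  intro p
  have := hl.2.2 (k - (p + 1)) (by omega)
  rw [show k - (k - (p + 1)) = p + 1 by omega] at this
  show multiplicities k l p < k - p
  rw [multiplicities_apply]
  omega

variable (k) in
def standardEquiv : {d // IsStandard (fun p : Fin k => k - p) d} ≃ {l // KIrreducible k l} where
  toFun d := ⟨toPartition k d, kIrreducible_toPartition d.2⟩
  invFun l := ⟨multiplicities k l, isStandard_multiplicities l.2⟩
  left_inv d := Subtype.ext (multiplicities_toPartition d.1)
  right_inv l := Subtype.ext (toPartition_multiplicities l.2.1 l.2.2.1)

theorem rename_monomial (d : Fin k →₀ ℕ) :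
    rename Fin.val (monomial d (1 : ℚ)) = hProd (toPartition k d) := by
  rw [← prod_X_pow_eq_monomial_one, map_prod, hProd, ← Multiset.prod_coe, ← Multiset.map_coe,
    toPartition, Multiset.sort_eq, Multiset.map_map, Finsupp.prod_map_toMultiset]
  simp [hh]

theorem quotientEquiv_mk_monomial {l : List ℕ} (hl : KIrreducible k l)
    (h : hProd l ∈ LamKAlg k) :
    quotientEquiv k (Ideal.Quotient.mk _ (monomial (multiplicities k l) 1)) =
      Ideal.Quotient.mk (rectIdeal k) ⟨hProd l, h⟩ := by
  refine congrArg _ (Subtype.ext ?_)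
  change (lamKAlgEquiv k _ : SymFn) = hProd l
  rw [coe_lamKAlgEquiv, rename_monomial, toPartition_multiplicities hl.1 hl.2.1]

end KRectangle

theorem irreducible_h_basis_of_quotient_general (k : ℕ)
    (hmem : ∀ l : List ℕ, IsPartition l → KBounded k l → hProd l ∈ LamKAlg k) :
    LinearIndependent ℚ
      (fun l : {l : List ℕ // KIrreducible k l} =>
        Ideal.Quotient.mk (rectIdeal k)
          (⟨hProd l.1, hmem l.1 l.2.1 l.2.2.1⟩ : LamKAlg k)) ∧
    Submodule.span ℚ
      (Set.range fun l : {l : List ℕ // KIrreducible k l} =>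
        Ideal.Quotient.mk (rectIdeal k)
          (⟨hProd l.1, hmem l.1 l.2.1 l.2.2.1⟩ : LamKAlg k)) = ⊤ := by
  let b := ((MvPolynomial.standardMonomialBasis (fun p : Fin k => k - p) (KRectangle.rectSchur k)
    KRectangle.hasLeadingMonomial_rectSchur fun p => Nat.sub_pos_of_lt p.2).map
      (KRectangle.quotientEquiv k).toLinearEquiv).reindex (KRectangle.standardEquiv k)
  have hb : ⇑b = fun l : {l // KIrreducible k l} =>
      Ideal.Quotient.mk (rectIdeal k) (⟨hProd l.1, hmem l.1 l.2.1 l.2.2.1⟩ : LamKAlg k) := by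
    funext l
    simp only [b, Module.Basis.reindex_apply, Module.Basis.map_apply,
      MvPolynomial.standardMonomialBasis, Module.Basis.mk_apply]
    exact KRectangle.quotientEquiv_mk_monomial l.2 _
  rw [← hb]
  exact ⟨b.linearIndependent, b.span_eq⟩

/-- The images of the homogeneous symmetric functions `h_λ`,
as `λ` ranges over the `k`-irreducible partitions, form a basis of the quotient
ring `Λ^{(k)}/I_k`.  (`hmem` records the true fact that `h_λ ∈ Λ^{(k)}` for
`k`-bounded `λ`.) -/
theorem irreducible_h_basis_of_quotient (k : ℕ) (hk : 1 ≤ k)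
    (hmem : ∀ l : List ℕ, IsPartition l → KBounded k l → hProd l ∈ LamKAlg k) :
    LinearIndependent ℚ
      (fun l : {l : List ℕ // KIrreducible k l} =>
        Ideal.Quotient.mk (rectIdeal k)
          (⟨hProd l.1, hmem l.1 l.2.1 l.2.2.1⟩ : LamKAlg k)) ∧
    Submodule.span ℚ
      (Set.range fun l : {l : List ℕ // KIrreducible k l} =>
        Ideal.Quotient.mk (rectIdeal k)
          (⟨hProd l.1, hmem l.1 l.2.1 l.2.2.1⟩ : LamKAlg k)) = ⊤ :=
  irreducible_h_basis_of_quotient_general k hmem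
end
end

section
/- Let n ≥ 1, 1 ≤ m ≤ n, δ = (n−1, n−2, …, 1, 0), and let λ and μ be partitions of the same integer, each with at most n parts (padded with zeros to length n), such that μ is not ≥ λ in dominance order. Let w = [w_1,…,w_n] be a minimal-length coset representative of S_n/(S_m × S_{n−m}), i.e. w = [i_1,…,i_m, j_1,…,j_{n−m}] where i_1 < ⋯ < i_m and j_1 < ⋯ < j_{n−m} are complementary in {1,…,n}; let α = (α_1,…,α_m) and β = (β_1,…,β_{n−m}) be the first m and last n−m entries of the vector w^{-1}(μ+δ) − δ = (μ_{w_1} − (w_1 − 1), …, μ_{w_n} − (w_n − n)) (β is automatically a partition). If α_r ≥ λ_r for all r = 1,…,m, then, setting N = (α_1+⋯+α_m) − (λ_1+⋯+λ_m) and β^N = (β_1 + N, β_2, …, β_{n−m}), there exists j with (β^N)_1 + ⋯ + (β^N)_j < λ_{m+1} + ⋯ + λ_{m+j}; that is, β^N is not ≥ (λ_{m+1},…,λ_n) in dominance order. -/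
/-!
Write `v = w⁻¹(μ + δ) - δ`, so `v p = f (w p) + p` with `f q = μ q - q` antitone, while
`μ p = f p + p`. By the rearrangement inequality, an antitone function summed over an initial
segment is largest when it is not permuted, so the partial sums of `v` are bounded by those of `μ`.
Hence the index `i` at which `μ` fails to dominate `λ` also gives `v₁ + ⋯ + v_i < λ₁ + ⋯ + λ_i`.
Since `α_r ≥ λ_r` for `r ≤ m`, necessarily `i > m`, and subtracting the first `m` terms on both
sides yields the required partial sum of `β^N` with `j = i - m`.
-/

theorem Finset.sum_comp_perm_le_sum_of_isLowerSet {ι β : Type*} [LinearOrder ι] [Fintype ι]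
    [AddCommMonoid β] [LinearOrder β] [IsOrderedCancelAddMonoid β]
    {g : ι → β} (hg : Antitone g) (σ : Equiv.Perm ι) {s : Finset ι}
    (hs : IsLowerSet (s : Set ι)) :
    ∑ i ∈ s, g (σ i) ≤ ∑ i ∈ s, g i := by
  let c : ι → ℕ := fun i => if i ∈ s then 1 else 0
  have hc : Antitone c := fun i j hij => by
    by_cases hj : j ∈ s
    · simp [c, hj, Finset.mem_coe.mp (hs hij hj)]
    · simp [c, hj]
  have key := (hc.monovary hg).sum_smul_comp_perm_le_sum_smul (σ := σ)
  simpa [c, ite_smul, Finset.sum_ite_mem] using key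

-- The vector `w⁻¹(μ + δ) - δ`; the constant `n - 1` in `δ` cancels.
def dotVector {n : ℕ} (mu : Fin n → ℕ) (w : Equiv.Perm (Fin n)) (p : Fin n) : ℤ :=
  (mu (w p) : ℤ) - ((w p : ℕ) : ℤ) + ((p : ℕ) : ℤ)

theorem sum_dotVector_le_of_isLowerSet {n : ℕ} {mu : Fin n → ℕ} (hmu : Antitone mu)
    (w : Equiv.Perm (Fin n)) {s : Finset (Fin n)} (hs : IsLowerSet (s : Set (Fin n))) :
    ∑ p ∈ s, dotVector mu w p ≤ ∑ p ∈ s, (mu p : ℤ) := by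
  let f : Fin n → ℤ := fun q => (mu q : ℤ) - ((q : ℕ) : ℤ)
  have hf : Antitone f := fun a b hab => by
    have := hmu hab
    have : (a : ℕ) ≤ b := hab
    simp only [f]
    omega
  calc ∑ p ∈ s, dotVector mu w p = ∑ p ∈ s, f (w p) + ∑ p ∈ s, ((p : ℕ) : ℤ) := by
        rw [← Finset.sum_add_distrib]; rfl
    _ ≤ ∑ p ∈ s, f p + ∑ p ∈ s, ((p : ℕ) : ℤ) :=
        add_le_add_left (Finset.sum_comp_perm_le_sum_of_isLowerSet hf w hs) _
    _ = ∑ p ∈ s, (mu p : ℤ) := by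
        rw [← Finset.sum_add_distrib]; simp [f]

theorem sum_Iic_eq_sum_lt_add_sum_Ico {n m : ℕ} (g : Fin n → ℤ) {i : Fin n} (hmi : m ≤ (i : ℕ)) :
    ∑ p ∈ Finset.Iic i, g p =
      ∑ p ∈ Finset.univ.filter (fun p : Fin n => (p : ℕ) < m), g p +
      ∑ p ∈ Finset.univ.filter (fun p : Fin n => m ≤ (p : ℕ) ∧ (p : ℕ) < m + (i + 1 - m)), g p := by
  rw [← Finset.sum_union]
  · congr 1
    ext p
    simp only [Finset.mem_Iic, Finset.mem_union, Finset.mem_filter, Finset.mem_univ, true_and,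
      Fin.le_def]
    omega
  · rw [Finset.disjoint_filter]
    omega

theorem beta_N_not_dominating_general
    (n m : ℕ)
    (lam mu : Fin n → ℕ) (hmu : Antitone mu)
    (hndom : ∃ i : Fin n,
      ∑ p ∈ Finset.univ.filter (fun p : Fin n => p ≤ i), mu p <
      ∑ p ∈ Finset.univ.filter (fun p : Fin n => p ≤ i), lam p)
    (w : Equiv.Perm (Fin n))
    (halpha : ∀ p : Fin n, (p : ℕ) < m →
      (lam p : ℤ) ≤ (mu (w p) : ℤ) - ((w p : ℕ) : ℤ) + ((p : ℕ) : ℤ)) :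
    ∃ j : ℕ, 1 ≤ j ∧ j ≤ n - m ∧
      ((∑ p ∈ Finset.univ.filter (fun p : Fin n => (p : ℕ) < m),
          ((mu (w p) : ℤ) - ((w p : ℕ) : ℤ) + ((p : ℕ) : ℤ))) -
        ∑ p ∈ Finset.univ.filter (fun p : Fin n => (p : ℕ) < m), (lam p : ℤ)) +
      (∑ p ∈ Finset.univ.filter (fun p : Fin n => m ≤ (p : ℕ) ∧ (p : ℕ) < m + j),
          ((mu (w p) : ℤ) - ((w p : ℕ) : ℤ) + ((p : ℕ) : ℤ))) <
      ∑ p ∈ Finset.univ.filter (fun p : Fin n => m ≤ (p : ℕ) ∧ (p : ℕ) < m + j),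
          (lam p : ℤ) := by
  obtain ⟨i, hi⟩ := hndom
  rw [Finset.filter_ge_eq_Iic] at hi
  have hlt : ∑ p ∈ Finset.Iic i, dotVector mu w p < ∑ p ∈ Finset.Iic i, (lam p : ℤ) :=
    (sum_dotVector_le_of_isLowerSet hmu w (Finset.coe_Iic i ▸ isLowerSet_Iic i)).trans_lt
      (by exact_mod_cast hi)
  have hmi : m ≤ (i : ℕ) := by
    by_contra! him
    refine hlt.not_ge (Finset.sum_le_sum fun p hp => halpha p ?_)
    have : (p : ℕ) ≤ i := Fin.le_def.mp (Finset.mem_Iic.mp hp)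
    omega
  refine ⟨i + 1 - m, by omega, by omega, ?_⟩
  rw [sum_Iic_eq_sum_lt_add_sum_Ico _ hmi, sum_Iic_eq_sum_lt_add_sum_Ico _ hmi] at hlt
  simp only [dotVector] at hlt
  linarith

/-- Let `1 ≤ m ≤ n`, and let `λ, μ` be partitions of the same
integer padded with zeros to length `n` (weakly decreasing functions
`Fin n → ℕ`), with `μ` not `≥ λ` in dominance order.  Let `w` be a
minimal-length coset representative of `S_n/(S_m × S_{n-m})`, i.e. a
permutation of `Fin n` whose one-line notation is increasing on the first `m`
and on the last `n-m` positions; the vector `w⁻¹(μ+δ) - δ` has entries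
`v p = μ_{w(p)} - (w(p) - p)`, `α` being its first `m` entries and `β` its last
`n-m` entries.  If `α_r ≥ λ_r` for all `r ≤ m`, then, with
`N = |α| - (λ₁ + ⋯ + λ_m)` and `β^N = (β₁+N, β₂, …)`, there is a `j` with
`1 ≤ j ≤ n-m` whose partial sum witnesses that `β^N` is not `≥ (λ_{m+1},…,λ_n)`
in dominance order: `N + Σ_{m ≤ p < m+j} v p < Σ_{m ≤ p < m+j} λ p`. -/
theorem beta_N_not_dominating
    (n m : ℕ) (hn : 1 ≤ n) (hm : 1 ≤ m) (hmn : m ≤ n)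
    (lam mu : Fin n → ℕ) (hlam : Antitone lam) (hmu : Antitone mu)
    (hsum : ∑ i, lam i = ∑ i, mu i)
    (hndom : ∃ i : Fin n,
      ∑ p ∈ Finset.univ.filter (fun p : Fin n => p ≤ i), mu p <
      ∑ p ∈ Finset.univ.filter (fun p : Fin n => p ≤ i), lam p)
    (w : Equiv.Perm (Fin n))
    (hw1 : ∀ p q : Fin n, p < q → (q : ℕ) < m → w p < w q)
    (hw2 : ∀ p q : Fin n, p < q → m ≤ (p : ℕ) → w p < w q)
    (halpha : ∀ p : Fin n, (p : ℕ) < m →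
      (lam p : ℤ) ≤ (mu (w p) : ℤ) - ((w p : ℕ) : ℤ) + ((p : ℕ) : ℤ)) :
    ∃ j : ℕ, 1 ≤ j ∧ j ≤ n - m ∧
      ((∑ p ∈ Finset.univ.filter (fun p : Fin n => (p : ℕ) < m),
          ((mu (w p) : ℤ) - ((w p : ℕ) : ℤ) + ((p : ℕ) : ℤ))) -
        ∑ p ∈ Finset.univ.filter (fun p : Fin n => (p : ℕ) < m), (lam p : ℤ)) +
      (∑ p ∈ Finset.univ.filter (fun p : Fin n => m ≤ (p : ℕ) ∧ (p : ℕ) < m + j),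
          ((mu (w p) : ℤ) - ((w p : ℕ) : ℤ) + ((p : ℕ) : ℤ))) <
      ∑ p ∈ Finset.univ.filter (fun p : Fin n => m ≤ (p : ℕ) ∧ (p : ℕ) < m + j),
          (lam p : ℤ) :=
  beta_N_not_dominating_general n m lam mu hmu hndom w halpha
end
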